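/- A run of the automaton A_G on a tree t is accepting if and only if the (unique) branch labelled with g-states is a good branch of t such that no good branch lies strictly to its left; consequently t is accepted iff t ∈ G, and the accepting run, when it exists, is unique. -/

import Mathlib

/-- Infinite binary trees over {a,b}; `true` = a, `false` = b. -/
abbrev Tree2 := List (Fin 2) → Bool

/-- The length-`n` prefix of a branch. -/
def pre (β : ℕ → Fin 2) (n : ℕ) : List (Fin 2) := List.ofFn (fun i : Fin n => β i)

/-- A branch is good: all its finite prefixes are labelled `a` and it turns left (0)
infinitely often. -/
def Good (t : Tree2) (β : ℕ → Fin 2) : Prop :=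
  (∀ n, t (pre β n) = true) ∧ (∀ m, ∃ n ≥ m, β n = 0)

/-- `β` is strictly to the left of `γ`. -/
def LeftOf (β γ : ℕ → Fin 2) : Prop :=
  ∃ n, (∀ i < n, β i = γ i) ∧ β n = 0 ∧ γ n = 1

/-- A branch passes through a node. -/
def Through (γ : ℕ → Fin 2) (v : List (Fin 2)) : Prop := pre γ v.length = v

/-- The set of trees that have a good branch. -/
def G : Set Tree2 := {t | ∃ β, Good t β}

/-- `r` occurs infinitely often in the sequence `g`. -/
def InfOften (g : ℕ → ℕ) (r : ℕ) : Prop := ∀ m, ∃ n ≥ m, g n = r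

/-- Parity condition: the maximal value occurring infinitely often is even. -/
def ParityOk (g : ℕ → ℕ) : Prop :=
  ∃ r, Even r ∧ InfOften g r ∧ ∀ r', InfOften g r' → r' ≤ r

/-- States of the unambiguous automaton `A_G`. -/
inductive QG | g1 | g2 | top2 | bot1 | l1 | l0 | top0
deriving DecidableEq

def rankG : QG → ℕ
  | .g1 => 1 | .g2 => 2 | .top2 => 2 | .bot1 => 1
  | .l1 => 1 | .l0 => 0 | .top0 => 0

/-- Transition relation of `A_G` (`true` = a, `false` = b). -/
def deltaG : QG → Bool → QG → QG → Prop := fun q a q1 q2 =>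
  match q, a with
  | .g1, true | .g2, true => (q1 = .g2 ∧ q2 = .top2) ∨ (q1 = .l1 ∧ q2 = .g1)
  | .g1, false | .g2, false => q1 = .bot1 ∧ q2 = .bot1
  | .l1, true | .l0, true => q1 = .l1 ∧ q2 = .l0
  | .l1, false | .l0, false => q1 = .top0 ∧ q2 = .top0
  | .top2, _ => q1 = .top2 ∧ q2 = .top2
  | .bot1, _ => q1 = .bot1 ∧ q2 = .bot1
  | .top0, _ => q1 = .top0 ∧ q2 = .top0

/-- A run of `A_G` on `t` starting in state `q0`. -/
def IsRunG (t : Tree2) (q0 : QG) (ρ : List (Fin 2) → QG) : Prop :=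
  ρ [] = q0 ∧ ∀ v : List (Fin 2), deltaG (ρ v) (t v) (ρ (v ++ [0])) (ρ (v ++ [1]))

/-- An accepting run: the parity condition holds on every branch. -/
def AccRunG (t : Tree2) (q0 : QG) (ρ : List (Fin 2) → QG) : Prop :=
  IsRunG t q0 ρ ∧ ∀ β : ℕ → Fin 2, ParityOk (fun n => rankG (ρ (pre β n)))

/-!
In a run from `g₁` the g-states form a single path from the root, the g-branch: a g-state
reading `a` sends exactly one child to a g-state and no other state leads back to one, so the
run is determined by this branch. A `b` on the g-branch leads to `⊥₁` forever; along the
g-branch the rank is 2 after a left move and 1 after a right move, so an accepting run needs a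
good g-branch. A branch leaving it to the right stays in `⊤₂`; one leaving it to the left
enters `l₁`, from where the ranks are 1 after left moves and 0 otherwise, until a `b` sends it
to `⊤₀`. So the run accepts iff no good branch leaves the g-branch to the left, i.e. iff the
g-branch is the leftmost good branch, which exists when `t ∈ G` and is unique.
-/

open Filter

section Branches

variable {β γ : ℕ → Fin 2}

theorem pre_succ (β : ℕ → Fin 2) (n : ℕ) : pre β (n + 1) = pre β n ++ [β n] := by
  rw [pre, List.ofFn_succ']
  simp [pre]

@[simp]
theorem length_pre (β : ℕ → Fin 2) (n : ℕ) : (pre β n).length = n := by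
  simp [pre]

theorem pre_eq_pre_iff {n : ℕ} : pre β n = pre γ n ↔ ∀ i < n, β i = γ i := by
  simp [pre, List.ofFn_inj, funext_iff, Fin.forall_iff]

theorem eq_of_forall_pre_eq (h : ∀ n, pre β n = pre γ n) : β = γ :=
  funext fun n => pre_eq_pre_iff.1 (h (n + 1)) n n.lt_succ_self

theorem pre_getD_length (v : List (Fin 2)) : pre (fun k => v.getD k 0) v.length = v := by
  simp [pre]

theorem exists_first_ne (h : β ≠ γ) : ∃ n, (∀ i < n, β i = γ i) ∧ β n ≠ γ n := by
  classical
  have hex : ∃ n, β n ≠ γ n := by simpa [funext_iff] using h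
  exact ⟨Nat.find hex, fun i hi => not_not.1 (Nat.find_min hex hi), Nat.find_spec hex⟩

theorem leftOf_or_leftOf_of_ne (h : β ≠ γ) : LeftOf β γ ∨ LeftOf γ β := by
  obtain ⟨n, hlt, hn⟩ := exists_first_ne h
  by_cases hβ : β n = 0
  · exact Or.inl ⟨n, hlt, hβ, by omega⟩
  · exact Or.inr ⟨n, fun i hi => (hlt i hi).symm, by omega, by omega⟩

theorem eq_of_not_leftOf (hβγ : ¬ LeftOf β γ) (hγβ : ¬ LeftOf γ β) : β = γ := by
  by_contra h
  exact (leftOf_or_leftOf_of_ne h).elim hβγ hγβ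

end Branches

section Parity

variable {g : ℕ → ℕ} {r r' c : ℕ}

theorem infOften_iff_frequently : InfOften g r ↔ ∃ᶠ n in atTop, g n = r :=
  frequently_atTop.symm

theorem le_of_infOften_of_eventually_le (hr' : InfOften g r') (hle : ∀ᶠ k in atTop, g k ≤ r) :
    r' ≤ r := by
  obtain ⟨k, hk, hkr⟩ := ((infOften_iff_frequently.1 hr').and_eventually hle).exists
  exact hk ▸ hkr

theorem parityOk_iff_of_eventually_le (hle : ∀ᶠ k in atTop, g k ≤ r) (hr : InfOften g r) :
    ParityOk g ↔ Even r := by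
  constructor
  · rintro ⟨r', he, hr', hmax⟩
    rwa [le_antisymm (le_of_infOften_of_eventually_le hr' hle) (hmax r hr)] at he
  · exact fun he => ⟨r, he, hr, fun r' hr' => le_of_infOften_of_eventually_le hr' hle⟩

theorem parityOk_iff_of_eventually_eq (h : ∀ᶠ k in atTop, g k = c) : ParityOk g ↔ Even c :=
  parityOk_iff_of_eventually_le (h.mono fun _ => le_of_eq)
    (infOften_iff_frequently.2 h.frequently)

end Parity

namespace QG

def IsG (q : QG) : Prop := q = g1 ∨ q = g2

def IsL (q : QG) : Prop := q = l1 ∨ q = l0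

end QG

theorem rankG_le_two (q : QG) : rankG q ≤ 2 := by
  cases q <;> decide

/-- `A_G` with the choice at g-states resolved: `d` is the direction of the g-child. -/
def stepG : Bool → Fin 2 → QG → Fin 2 → QG
  | true, d, .g1, i | true, d, .g2, i =>
      if i = d then (if d = 0 then .g2 else .g1) else (if d = 0 then .top2 else .l1)
  | false, _, .g1, _ | false, _, .g2, _ => .bot1
  | true, _, .l1, i | true, _, .l0, i => if i = 0 then .l1 else .l0
  | false, _, .l1, _ | false, _, .l0, _ => .top0
  | _, _, q, _ => q

theorem deltaG_stepG (q : QG) (a : Bool) (d : Fin 2) :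
    deltaG q a (stepG a d q 0) (stepG a d q 1) := by
  cases q <;> cases a <;> fin_cases d <;> simp [deltaG, stepG]

theorem eq_stepG_of_deltaG {q q₀ q₁ : QG} {a : Bool} (h : deltaG q a q₀ q₁) :
    q₀ = stepG a (if q₁ = .g1 then 1 else 0) q 0 ∧
      q₁ = stepG a (if q₁ = .g1 then 1 else 0) q 1 := by
  cases q <;> cases a <;> simp only [deltaG] at h <;>
    rcases h with ⟨rfl, rfl⟩ | ⟨rfl, rfl⟩ <;> simp_all [stepG]

theorem isG_and_eq_of_stepG_isG {a : Bool} {d i : Fin 2} {q : QG} (h : (stepG a d q i).IsG) :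
    q.IsG ∧ i = d := by
  cases q <;> cases a <;> fin_cases d <;> fin_cases i <;> simp_all [stepG, QG.IsG]

theorem stepG_dir_congr {a : Bool} {q : QG} (hq : ¬ q.IsG) (d d' i : Fin 2) :
    stepG a d q i = stepG a d' q i := by
  cases q <;> cases a <;> simp_all [stepG, QG.IsG]

theorem stepG_true_of_isG {q : QG} (hq : q.IsG) (d i : Fin 2) :
    stepG true d q i =
      if i = d then (if d = 0 then .g2 else .g1) else (if d = 0 then .top2 else .l1) := by
  rcases hq with rfl | rfl <;> rfl

theorem stepG_false_of_isG {q : QG} (hq : q.IsG) (d i : Fin 2) : stepG false d q i = .bot1 := by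
  rcases hq with rfl | rfl <;> rfl

theorem stepG_true_of_isL {q : QG} (hq : q.IsL) (d i : Fin 2) :
    stepG true d q i = if i = 0 then .l1 else .l0 := by
  rcases hq with rfl | rfl <;> rfl

theorem stepG_false_of_isL {q : QG} (hq : q.IsL) (d i : Fin 2) : stepG false d q i = .top0 := by
  rcases hq with rfl | rfl <;> rfl

def pathOf (c : List (Fin 2) → Fin 2) : ℕ → List (Fin 2)
  | 0 => []
  | n + 1 => pathOf c n ++ [c (pathOf c n)]

def branchOf (c : List (Fin 2) → Fin 2) (n : ℕ) : Fin 2 := c (pathOf c n)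

theorem pre_branchOf (c : List (Fin 2) → Fin 2) (n : ℕ) : pre (branchOf c) n = pathOf c n := by
  induction n with
  | zero => rfl
  | succ n ih => rw [pre_succ, ih, pathOf, branchOf]

theorem branchOf_apply (c : List (Fin 2) → Fin 2) (n : ℕ) :
    branchOf c n = c (pre (branchOf c) n) := by
  rw [pre_branchOf, branchOf]

section Runs

variable {t : Tree2} {q₀ : QG} {ρ : List (Fin 2) → QG} {β γ : ℕ → Fin 2}

/-- The direction of the g-child of a g-node `v`: transition (b) puts `g₁` on the right child,
(a) puts `⊤₂` there. -/
def dirAt (ρ : List (Fin 2) → QG) (v : List (Fin 2)) : Fin 2 :=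
  if ρ (v ++ [1]) = .g1 then 1 else 0

def gDir (ρ : List (Fin 2) → QG) : ℕ → Fin 2 := branchOf (dirAt ρ)

theorem gDir_apply (ρ : List (Fin 2) → QG) (n : ℕ) : gDir ρ n = dirAt ρ (pre (gDir ρ) n) :=
  branchOf_apply _ n

def runAlong (t : Tree2) (β : ℕ → Fin 2) (v : List (Fin 2)) : QG :=
  v.reverseRec (motive := fun _ => QG) .g1 fun w i q => stepG (t w) (β w.length) q i

theorem runAlong_nil (t : Tree2) (β : ℕ → Fin 2) : runAlong t β [] = .g1 := by
  simp [runAlong]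

theorem runAlong_snoc (t : Tree2) (β : ℕ → Fin 2) (v : List (Fin 2)) (i : Fin 2) :
    runAlong t β (v ++ [i]) = stepG (t v) (β v.length) (runAlong t β v) i := by
  simp [runAlong]

theorem isRunG_runAlong (t : Tree2) (β : ℕ → Fin 2) : IsRunG t .g1 (runAlong t β) := by
  refine ⟨runAlong_nil t β, fun v => ?_⟩
  simpa only [runAlong_snoc] using deltaG_stepG _ _ _

theorem runAlong_pre_isG (ht : ∀ n, t (pre β n) = true) (n : ℕ) :
    (runAlong t β (pre β n)).IsG := by
  induction n with
  | zero => exact Or.inl (runAlong_nil t β)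
  | succ n ih =>
    rw [pre_succ, runAlong_snoc, length_pre, ht n, stepG_true_of_isG ih, if_pos rfl]
    split_ifs
    exacts [Or.inr rfl, Or.inl rfl]

theorem IsRunG.apply_snoc (hρ : IsRunG t q₀ ρ) (v : List (Fin 2)) (i : Fin 2) :
    ρ (v ++ [i]) = stepG (t v) (dirAt ρ v) (ρ v) i := by
  obtain ⟨h₀, h₁⟩ := eq_stepG_of_deltaG (hρ.2 v)
  fin_cases i
  exacts [h₀, h₁]

theorem IsRunG.apply_pre_succ (hρ : IsRunG t q₀ ρ) (γ : ℕ → Fin 2) (k : ℕ) :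
    ρ (pre γ (k + 1)) = stepG (t (pre γ k)) (dirAt ρ (pre γ k)) (ρ (pre γ k)) (γ k) := by
  rw [pre_succ, hρ.apply_snoc]

theorem IsRunG.eq_pre_gDir_of_isG (hρ : IsRunG t .g1 ρ) {v : List (Fin 2)} (hv : (ρ v).IsG) :
    v = pre (gDir ρ) v.length := by
  induction v using List.reverseRecOn with
  | nil => rfl
  | append_singleton v i ih =>
    rw [hρ.apply_snoc] at hv
    obtain ⟨hg, rfl⟩ := isG_and_eq_of_stepG_isG hv
    have hv' := ih hg
    rw [List.length_append, List.length_singleton, pre_succ, ← hv', gDir_apply, ← hv']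

theorem IsRunG.eq_runAlong_gDir (hρ : IsRunG t .g1 ρ) : ρ = runAlong t (gDir ρ) := by
  funext v
  induction v using List.reverseRecOn with
  | nil => rw [hρ.1, runAlong_nil]
  | append_singleton v i ih =>
    rw [hρ.apply_snoc, runAlong_snoc, ← ih]
    by_cases hg : (ρ v).IsG
    · rw [gDir_apply, ← hρ.eq_pre_gDir_of_isG hg]
    · exact stepG_dir_congr hg _ _ _

theorem IsRunG.apply_pre_succ_of_pre_eq (hρ : IsRunG t q₀ ρ) {n : ℕ}
    (h : pre γ n = pre (gDir ρ) n) :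
    ρ (pre γ (n + 1)) =
      stepG (t (pre (gDir ρ) n)) (gDir ρ n) (ρ (pre (gDir ρ) n)) (γ n) := by
  rw [hρ.apply_pre_succ, h, ← gDir_apply]

end Runs

section AlongBranch

variable {t : Tree2} {q₀ : QG} {ρ : List (Fin 2) → QG} {γ : ℕ → Fin 2} {m : ℕ}

theorem IsRunG.eventually_eq_of_absorbing (hρ : IsRunG t q₀ ρ) {q : QG}
    (hq : ∀ a d i, stepG a d q i = q) (hm : ρ (pre γ m) = q) :
    ∀ᶠ k in atTop, ρ (pre γ k) = q :=
  eventually_atTop.2 ⟨m, fun k hk => Nat.le_induction hm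
    (fun k _ ih => by rw [hρ.apply_pre_succ, ih, hq]) k hk⟩

theorem IsRunG.parityOk_iff_of_absorbing (hρ : IsRunG t q₀ ρ) {q : QG}
    (hq : ∀ a d i, stepG a d q i = q) (hm : ρ (pre γ m) = q) :
    ParityOk (fun n => rankG (ρ (pre γ n))) ↔ Even (rankG q) :=
  parityOk_iff_of_eventually_eq
    ((hρ.eventually_eq_of_absorbing hq hm).mono fun _ hk => congrArg rankG hk)

theorem IsRunG.isL_of_forall_label (hρ : IsRunG t q₀ ρ) (hm : (ρ (pre γ m)).IsL) {k : ℕ}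
    (hmk : m ≤ k) (ht : ∀ j, m ≤ j → j < k → t (pre γ j) = true) : (ρ (pre γ k)).IsL := by
  induction k, hmk using Nat.le_induction with
  | base => exact hm
  | succ k hmk ih =>
    rw [hρ.apply_pre_succ, ht k hmk k.lt_succ_self,
      stepG_true_of_isL (ih fun j hmj hjk => ht j hmj (hjk.trans k.lt_succ_self))]
    split_ifs
    exacts [Or.inl rfl, Or.inr rfl]

theorem IsRunG.rankG_pre_succ_of_isL (hρ : IsRunG t q₀ ρ) (hm : (ρ (pre γ m)).IsL)
    (ht : ∀ j ≥ m, t (pre γ j) = true) {k : ℕ} (hk : m ≤ k) :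
    rankG (ρ (pre γ (k + 1))) = if γ k = 0 then 1 else 0 := by
  rw [hρ.apply_pre_succ, ht k hk,
    stepG_true_of_isL (hρ.isL_of_forall_label hm hk fun j hj _ => ht j hj)]
  split_ifs <;> rfl

theorem IsRunG.exists_top0_of_isL (hρ : IsRunG t q₀ ρ) (hm : (ρ (pre γ m)).IsL)
    (hf : ∃ k ≥ m, t (pre γ k) = false) : ∃ k, ρ (pre γ k) = .top0 := by
  classical
  have hk := Nat.find_spec hf
  have hL : (ρ (pre γ (Nat.find hf))).IsL := hρ.isL_of_forall_label hm hk.1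
    fun j hj hjk => by simpa [hj] using Nat.find_min hf hjk
  exact ⟨Nat.find hf + 1, by rw [hρ.apply_pre_succ, hk.2, stepG_false_of_isL hL]⟩

theorem IsRunG.parityOk_iff_of_isL (hρ : IsRunG t q₀ ρ) (hm : (ρ (pre γ m)).IsL) :
    ParityOk (fun n => rankG (ρ (pre γ n))) ↔
      ¬ ((∀ j ≥ m, t (pre γ j) = true) ∧ ∀ m', ∃ k ≥ m', γ k = 0) := by
  by_cases ht : ∀ j ≥ m, t (pre γ j) = true
  · have hrank : ∀ k ≥ m, rankG (ρ (pre γ (k + 1))) = if γ k = 0 then 1 else 0 :=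
      fun k hk => hρ.rankG_pre_succ_of_isL hm ht hk
    by_cases hleft : ∀ m', ∃ k ≥ m', γ k = 0
    · have hle : ∀ᶠ n in atTop, rankG (ρ (pre γ n)) ≤ 1 := eventually_atTop.2 ⟨m + 1,
        fun n hn => by
          obtain ⟨k, rfl⟩ : ∃ k, n = k + 1 := ⟨n - 1, by omega⟩
          rw [hrank k (by omega)]
          split_ifs <;> decide⟩
      have hone : InfOften (fun n => rankG (ρ (pre γ n))) 1 := fun m' => by
        obtain ⟨k, hk, hk0⟩ := hleft (max m' m)
        exact ⟨k + 1, by omega, by simp [hrank k (le_of_max_le_right hk), hk0]⟩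
      exact (parityOk_iff_of_eventually_le hle hone).trans
        (iff_of_false (by decide) (not_not.2 ⟨ht, hleft⟩))
    · obtain ⟨m', hm'⟩ := not_forall.1 hleft
      have hzero : ∀ᶠ n in atTop, rankG (ρ (pre γ n)) = 0 := eventually_atTop.2 ⟨max m' m + 1,
        fun n hn => by
          obtain ⟨k, rfl⟩ : ∃ k, n = k + 1 := ⟨n - 1, by omega⟩
          rw [hrank k (by omega), if_neg fun hk => hm' ⟨k, by omega, hk⟩]⟩
      exact iff_of_true ((parityOk_iff_of_eventually_eq hzero).2 (by decide))
        fun h => hleft h.2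
  · have hf : ∃ k ≥ m, t (pre γ k) = false := by simpa using ht
    obtain ⟨k, hk⟩ := hρ.exists_top0_of_isL hm hf
    exact iff_of_true ((hρ.parityOk_iff_of_absorbing (q := .top0)
      (fun a d i => by cases a <;> rfl) hk).2 (by decide))
      fun h => ht h.1

end AlongBranch

section GBranch

variable {t : Tree2} {q₀ : QG} {ρ : List (Fin 2) → QG} {γ : ℕ → Fin 2}

theorem AccRunG.ne_bot1 (hacc : AccRunG t q₀ ρ) (v : List (Fin 2)) : ρ v ≠ .bot1 := by
  intro hv
  have h := (hacc.1.parityOk_iff_of_absorbing (q := .bot1) (fun a d i => by cases a <;> rfl)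
    (γ := fun k => v.getD k 0) (m := v.length) (by rw [pre_getD_length, hv])).1 (hacc.2 _)
  exact absurd h (by decide)

theorem AccRunG.label_eq_true_of_isG (hacc : AccRunG t q₀ ρ) {v : List (Fin 2)}
    (hv : (ρ v).IsG) : t v = true := by
  by_contra h
  apply hacc.ne_bot1 (v ++ [0])
  rw [hacc.1.apply_snoc, Bool.eq_false_iff.2 h, stepG_false_of_isG hv]

theorem AccRunG.isG_pre_gDir (hacc : AccRunG t .g1 ρ) (n : ℕ) : (ρ (pre (gDir ρ) n)).IsG := by
  induction n with
  | zero => exact Or.inl hacc.1.1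
  | succ n ih =>
    rw [hacc.1.apply_pre_succ_of_pre_eq rfl, hacc.label_eq_true_of_isG ih,
      stepG_true_of_isG ih, if_pos rfl]
    split_ifs
    exacts [Or.inr rfl, Or.inl rfl]

theorem AccRunG.good_gDir (hacc : AccRunG t .g1 ρ) : Good t (gDir ρ) := by
  refine ⟨fun n => hacc.label_eq_true_of_isG (hacc.isG_pre_gDir n), fun m => ?_⟩
  by_contra! hright
  have hg1 : ∀ᶠ k in atTop, rankG (ρ (pre (gDir ρ) k)) = 1 := eventually_atTop.2 ⟨m + 1,
    fun k hk => by
      obtain ⟨k, rfl⟩ : ∃ j, k = j + 1 := ⟨k - 1, by omega⟩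
      have hk1 : gDir ρ k = 1 := by have := hright k (by omega); omega
      have hg := hacc.isG_pre_gDir k
      rw [hacc.1.apply_pre_succ_of_pre_eq rfl, hacc.label_eq_true_of_isG hg,
        stepG_true_of_isG hg, hk1]
      rfl⟩
  exact absurd ((parityOk_iff_of_eventually_eq hg1).1 (hacc.2 _)) (by decide)

theorem AccRunG.not_leftOf_gDir (hacc : AccRunG t .g1 ρ) (hγ : Good t γ) :
    ¬ LeftOf γ (gDir ρ) := by
  rintro ⟨n, hlt, hγn, hβn⟩
  have hg := hacc.isG_pre_gDir n
  have hL : (ρ (pre γ (n + 1))).IsL := by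
    rw [hacc.1.apply_pre_succ_of_pre_eq (pre_eq_pre_iff.2 hlt), hacc.label_eq_true_of_isG hg,
      stepG_true_of_isG hg, hγn, hβn]
    exact Or.inl rfl
  exact (hacc.1.parityOk_iff_of_isL hL).1 (hacc.2 γ) ⟨fun j _ => hγ.1 j, hγ.2⟩

theorem IsRunG.accRunG_of_gDir (hρ : IsRunG t .g1 ρ) (hg : ∀ n, (ρ (pre (gDir ρ) n)).IsG)
    (hgood : Good t (gDir ρ)) (hleft : ∀ γ, Good t γ → ¬ LeftOf γ (gDir ρ)) :
    AccRunG t .g1 ρ := by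
  have hnext : ∀ {γ : ℕ → Fin 2} {n : ℕ}, pre γ n = pre (gDir ρ) n →
      ρ (pre γ (n + 1)) = stepG true (gDir ρ n) (ρ (pre (gDir ρ) n)) (γ n) := fun h => by
    rw [hρ.apply_pre_succ_of_pre_eq h, hgood.1]
  refine ⟨hρ, fun γ => ?_⟩
  by_cases hγ : γ = gDir ρ
  · subst hγ
    have htwo : InfOften (fun n => rankG (ρ (pre (gDir ρ) n))) 2 := fun m => by
      obtain ⟨k, hk, hk0⟩ := hgood.2 m
      refine ⟨k + 1, by omega, ?_⟩
      simp only [hnext rfl, stepG_true_of_isG (hg k), hk0]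
      rfl
    exact (parityOk_iff_of_eventually_le (.of_forall fun _ => rankG_le_two _) htwo).2
      (by decide)
  rcases leftOf_or_leftOf_of_ne hγ with ⟨n, hlt, hγn, hβn⟩ | ⟨n, hlt, hβn, hγn⟩
  · have hL : (ρ (pre γ (n + 1))).IsL := by
      rw [hnext (pre_eq_pre_iff.2 hlt), stepG_true_of_isG (hg n), hγn, hβn]
      exact Or.inl rfl
    refine (hρ.parityOk_iff_of_isL hL).2 fun ⟨ht, hinf⟩ => hleft γ ⟨fun j => ?_, hinf⟩
      ⟨n, hlt, hγn, hβn⟩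
    rcases Nat.lt_or_ge n j with hj | hj
    · exact ht j hj
    · rw [pre_eq_pre_iff.2 fun i hi => hlt i (by omega)]
      exact hgood.1 j
  · have htop : ρ (pre γ (n + 1)) = .top2 := by
      rw [hnext (pre_eq_pre_iff.2 fun i hi => (hlt i hi).symm), stepG_true_of_isG (hg n), hγn,
        hβn]
      rfl
    exact (hρ.parityOk_iff_of_absorbing (fun a d i => by cases a <;> rfl) htop).2 (by decide)

end GBranch

section Leftmost

variable {t : Tree2} {γ : ℕ → Fin 2} {v : List (Fin 2)}

def HasGoodThrough (t : Tree2) (v : List (Fin 2)) : Prop := ∃ γ, Good t γ ∧ Through γ v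

open scoped Classical in
noncomputable def leftmostGood (t : Tree2) : ℕ → Fin 2 :=
  branchOf fun v => if HasGoodThrough t (v ++ [0]) then 0 else 1

theorem through_snoc (h : Through γ v) : Through γ (v ++ [γ v.length]) := by
  simp only [Through, List.length_append, List.length_singleton, pre_succ]
  rw [h]

theorem hasGoodThrough_pre_leftmostGood (h : t ∈ G) (n : ℕ) :
    HasGoodThrough t (pre (leftmostGood t) n) := by
  classical
  induction n with
  | zero => exact h.imp fun γ hγ => ⟨hγ, rfl⟩
  | succ n ih =>
    obtain ⟨γ, hγ, hthr⟩ := ih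
    rw [pre_succ, leftmostGood, branchOf_apply, ← leftmostGood]
    split_ifs with h0
    · exact h0
    · have hthr' := through_snoc hthr
      rw [length_pre] at hthr'
      have hγn : γ n = 1 := by
        by_contra hne
        exact h0 ⟨γ, hγ, by rwa [show γ n = 0 by omega] at hthr'⟩
      exact ⟨γ, hγ, hγn ▸ hthr'⟩

theorem not_leftOf_leftmostGood (hγ : Good t γ) : ¬ LeftOf γ (leftmostGood t) := by
  classical
  rintro ⟨n, hlt, hγn, hLn⟩
  have hthr : Through γ (pre (leftmostGood t) n) := by
    rw [Through, length_pre]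
    exact pre_eq_pre_iff.2 hlt
  have hgood : HasGoodThrough t (pre (leftmostGood t) n ++ [0]) :=
    ⟨γ, hγ, by simpa [hγn] using through_snoc hthr⟩
  rw [leftmostGood, branchOf_apply, ← leftmostGood, if_pos hgood] at hLn
  exact absurd hLn (by decide)

theorem good_leftmostGood (h : t ∈ G) : Good t (leftmostGood t) := by
  refine ⟨fun n => ?_, fun m => ?_⟩
  · obtain ⟨γ, hγ, hthr⟩ := hasGoodThrough_pre_leftmostGood h n
    rw [Through, length_pre] at hthr
    rw [← hthr]
    exact hγ.1 n
  · by_contra! hright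
    obtain ⟨γ, hγ, hthr⟩ := hasGoodThrough_pre_leftmostGood h m
    rw [Through, length_pre, pre_eq_pre_iff] at hthr
    obtain ⟨k, hk, hk0⟩ := hγ.2 m
    have hne : γ ≠ leftmostGood t := fun he => hright k hk (he ▸ hk0)
    rcases leftOf_or_leftOf_of_ne hne with hl | ⟨N, hlt, hLN, hγN⟩
    · exact not_leftOf_leftmostGood hγ hl
    · have hNm : N < m := by
        by_contra hN
        exact hright N (by omega) hLN
      rw [hthr N hNm, hLN] at hγN
      exact absurd hγN (by decide)

end Leftmost

theorem IsRunG.accRunG_iff {t : Tree2} {ρ : List (Fin 2) → QG} (hρ : IsRunG t .g1 ρ) :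
    AccRunG t .g1 ρ ↔ ∃ β : ℕ → Fin 2, (∀ n, (ρ (pre β n)).IsG) ∧
      Good t β ∧ ∀ γ, Good t γ → ¬ LeftOf γ β := by
  refine ⟨fun hacc => ⟨gDir ρ, hacc.isG_pre_gDir, hacc.good_gDir,
    fun γ hγ => hacc.not_leftOf_gDir hγ⟩, ?_⟩
  rintro ⟨β, hg, hgood, hleft⟩
  obtain rfl : β = gDir ρ := eq_of_forall_pre_eq fun n => by
    simpa using hρ.eq_pre_gDir_of_isG (hg n)
  exact hρ.accRunG_of_gDir hg hgood hleft

/-- A run of `A_G` on `t` is accepting iff the branch labelled with g-states is a good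
branch with no good branch strictly to its left; consequently `t` is accepted iff
`t ∈ G`, and the accepting run, when it exists, is unique. -/
theorem AG_run_characterization :
    (∀ (t : Tree2) (ρ : List (Fin 2) → QG), IsRunG t QG.g1 ρ →
      (AccRunG t QG.g1 ρ ↔
        ∃ β : ℕ → Fin 2,
          (∀ n, ρ (pre β n) = QG.g1 ∨ ρ (pre β n) = QG.g2) ∧
          Good t β ∧ ∀ γ, Good t γ → ¬ LeftOf γ β)) ∧
    (∀ t : Tree2, (∃ ρ, AccRunG t QG.g1 ρ) ↔ t ∈ G) ∧
    (∀ (t : Tree2) ρ₁ ρ₂, AccRunG t QG.g1 ρ₁ → AccRunG t QG.g1 ρ₂ → ρ₁ = ρ₂) := by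
  refine ⟨fun t ρ hρ => hρ.accRunG_iff, fun t => ⟨?_, fun h => ?_⟩, ?_⟩
  · rintro ⟨ρ, hacc⟩
    exact ⟨gDir ρ, hacc.good_gDir⟩
  · have hgood := good_leftmostGood h
    exact ⟨runAlong t (leftmostGood t), (isRunG_runAlong t _).accRunG_iff.2
      ⟨leftmostGood t, runAlong_pre_isG hgood.1, hgood, fun γ hγ => not_leftOf_leftmostGood hγ⟩⟩
  · intro t ρ₁ ρ₂ h₁ h₂
    have hdir : gDir ρ₁ = gDir ρ₂ :=
      eq_of_not_leftOf (h₂.not_leftOf_gDir h₁.good_gDir) (h₁.not_leftOf_gDir h₂.good_gDir)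
    rw [h₁.1.eq_runAlong_gDir, h₂.1.eq_runAlong_gDir, hdir]
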